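/- arXiv:1606.08831 — 2 statements merged into one kernel-verified Lean document; each statement's English description precedes it below -/
import Mathlib

section
/- Let L be a lattice in ℝ^d and let (Bₙ) be the sequence of centered cubes [-n,n]^d. Then the normalised finite autocorrelation measures γₙ = (1/vol(Bₙ)) · (δ_L|_{Bₙ}) * (δ_L|_{-Bₙ})~ converge vaguely as n → ∞ to dens(L) · δ_L; i.e., for every continuous compactly supported f : ℝ^d → ℂ, (1/vol(Bₙ)) ∑_{x,y ∈ L∩Bₙ} f(x - y) → dens(L) · ∑_{z ∈ L} f(z). -/
/-!
Cocompactness forces `L` to span `ℝ^d`, so `L` is a full `ℤ`-lattice whose covolume is the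
volume of any fundamental domain. Grouping the pairs `(x, y)` of lattice points in `Bₙ` by their
difference `z`, only the finitely many `z ∈ L ∩ supp f` contribute, and `z` is weighted by the
number of `x ∈ L ∩ Bₙ` with `x - z ∈ Bₙ`. That number lies between `#(L ∩ B_{n-‖z‖})` and
`#(L ∩ Bₙ)`, both of which are `(2n)^d / covol(L) + o(n^d)` by the lattice point count in a
dilated cube.
-/

open MeasureTheory Filter Metric Pointwise Topology

theorem AddSubgroup.span_eq_top_of_compactSpace_quotient {E : Type*} [NormedAddCommGroup E]
    [NormedSpace ℝ E] [FiniteDimensional ℝ E] (L : AddSubgroup E) [CompactSpace (E ⧸ L)] :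
    Submodule.span ℝ (L : Set E) = ⊤ := by
  by_contra h
  obtain ⟨φ, hφ0, hφ⟩ := Submodule.exists_dual_map_eq_bot_of_lt_top (lt_top_iff_ne_top.mpr h)
    inferInstance
  have hφL : ∀ x ∈ L, φ x = 0 := fun x hx => by
    simpa [hφ] using Submodule.mem_map_of_mem (f := φ) (Submodule.subset_span hx)
  let ψ : E ⧸ L →+ ℝ := QuotientAddGroup.lift L φ.toAddMonoidHom hφL
  have hψ : Continuous ψ := continuous_quot_lift _ φ.continuous_of_finiteDimensional
  obtain ⟨x, hx⟩ : ∃ x, φ x ≠ 0 := by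
    by_contra! hc
    exact hφ0 (LinearMap.ext hc)
  have hψ_surj : Function.Surjective ψ := fun r =>
    ⟨QuotientAddGroup.mk ((r / φ x) • x), by
      change φ ((r / φ x) • x) = r
      rw [map_smul, smul_eq_mul, div_mul_cancel₀ _ hx]⟩
  exact noncompact_univ ℝ (hψ_surj.range_eq ▸ isCompact_range hψ)

theorem AddSubgroup.finite_inter_of_isBounded {E : Type*} [NormedAddCommGroup E] [ProperSpace E]
    (L : AddSubgroup E) [DiscreteTopology L] {K : Set E} (hK : Bornology.IsBounded K) :
    ((L : Set E) ∩ K).Finite :=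
  Set.inter_comm _ _ ▸ finite_isBounded_inter_isClosed DiscreteTopology.isDiscrete hK
    AddSubgroup.isClosed_of_discrete

theorem AddSubgroup.inter_closedBall_sub_norm_subset {E : Type*} [SeminormedAddCommGroup E]
    (L : AddSubgroup E) {z : E} (hz : z ∈ L) (r : ℝ) :
    (L : Set E) ∩ closedBall 0 (r - ‖z‖) ⊆
      {x ∈ (L : Set E) ∩ closedBall 0 r | x - z ∈ (L : Set E) ∩ closedBall 0 r} := by
  rintro x ⟨hxL, hx⟩
  rw [mem_closedBall_zero_iff] at hx
  have hxr : ‖x‖ ≤ r := by linarith [norm_nonneg z]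
  refine ⟨⟨hxL, mem_closedBall_zero_iff.mpr hxr⟩, sub_mem hxL hz, mem_closedBall_zero_iff.mpr ?_⟩
  linarith [norm_sub_le x z]

theorem Set.pi_univ_Icc_neg_eq_closedBall {ι : Type*} [Fintype ι] {r : ℝ} (hr : 0 ≤ r) :
    (Set.pi Set.univ fun _ : ι => Set.Icc (-r) r) = closedBall (0 : ι → ℝ) r := by
  rw [closedBall_pi _ hr]
  simp only [Pi.zero_apply, Real.closedBall_zero_eq_Icc]

theorem card_closedBall_one_inter_inv_smul {E : Type*} [NormedAddCommGroup E] [NormedSpace ℝ E]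
    (s : Set E) {r : ℝ} (hr : 0 < r) :
    Nat.card (closedBall (0 : E) 1 ∩ r⁻¹ • s : Set E) = Nat.card (s ∩ closedBall 0 r : Set E) := by
  rw [← Nat.card_image_of_injective (MulAction.injective₀ hr.ne'), Set.image_smul,
    Set.smul_set_inter₀ hr.ne', smul_inv_smul₀ hr.ne', _root_.smul_closedBall _ _ zero_le_one,
    smul_zero, Real.norm_of_nonneg hr.le, mul_one, Set.inter_comm]

theorem Finset.sum_sum_sub_eq_sum_card_nsmul {G M : Type*} [AddCommGroup G] [DecidableEq G]
    [AddCommMonoid M] (A T : Finset G) (f : G → M)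
    (hT : ∀ x ∈ A, ∀ y ∈ A, f (x - y) ≠ 0 → x - y ∈ T) :
    ∑ x ∈ A, ∑ y ∈ A, f (x - y) = ∑ z ∈ T, (A.filter (· - z ∈ A)).card • f z := by
  have inner : ∀ x ∈ A, ∑ y ∈ A, f (x - y) = ∑ z ∈ T, if x - z ∈ A then f z else 0 := by
    intro x hx
    refine Finset.sum_bij_ne_zero (fun y _ _ => x - y) (fun y hy hf => ?_)
      (fun y₁ _ _ y₂ _ _ h => sub_right_injective h) (fun z hz hf => ?_) (fun y hy _ => ?_)
    · simpa [sub_sub_cancel, hy] using hT x hx y hy hf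
    · have hxz : x - z ∈ A := by by_contra h; simp [h] at hf
      exact ⟨x - z, hxz, by simpa [hxz] using hf, sub_sub_cancel x z⟩
    · simp [sub_sub_cancel, hy]
  rw [Finset.sum_congr rfl inner, Finset.sum_comm]
  simp only [← Finset.sum_filter, Finset.sum_const]

theorem Set.Finite.tsum_prod_sub_eq_sum_ncard_nsmul {G M : Type*} [AddCommGroup G]
    [AddCommMonoid M] [TopologicalSpace M] {S : Set G} (hS : S.Finite) (T : Finset G) (f : G → M)
    (hT : ∀ x ∈ S, ∀ y ∈ S, f (x - y) ≠ 0 → x - y ∈ T) :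
    ∑' p : S × S, f (p.1 - p.2) = ∑ z ∈ T, {x ∈ S | x - z ∈ S}.ncard • f z := by
  classical
  have := hS.fintype
  rw [tsum_fintype, Fintype.sum_prod_type]
  simp only [fun x => Finset.sum_set_coe (f := fun y => f (x - y)) S]
  rw [Finset.sum_set_coe (f := fun x => ∑ y ∈ S.toFinset, f (x - y)),
    Finset.sum_sum_sub_eq_sum_card_nsmul _ T f (by simpa using hT)]
  congr! with z
  rw [Set.ncard_eq_toFinset_card']
  simp

theorem tsum_subtype_eq_sum {α M : Type*} [AddCommMonoid M] [TopologicalSpace M]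
    {s : Set α} {T : Finset α} (f : α → M) (hTs : ∀ z ∈ T, z ∈ s)
    (hT : ∀ z ∈ s, f z ≠ 0 → z ∈ T) :
    ∑' z : s, f z = ∑ z ∈ T, f z := by
  rw [tsum_subtype, tsum_eq_sum fun z hzT =>
    Set.indicator_apply_eq_zero.mpr fun hz => by_contra (hzT ∘ hT z hz)]
  exact Finset.sum_congr rfl fun z hz => Set.indicator_of_mem (hTs z hz) f

namespace ZLattice

variable {ι : Type*} [Fintype ι] (Λ : Submodule ℤ (ι → ℝ)) [DiscreteTopology Λ] [IsZLattice ℝ Λ]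

theorem tendsto_card_inter_closedBall_div_pow :
    Tendsto (fun n : ℕ => (Nat.card ((Λ : Set (ι → ℝ)) ∩ closedBall 0 n : Set (ι → ℝ)) : ℝ) /
      (2 * n) ^ Fintype.card ι) atTop (𝓝 (covolume Λ)⁻¹) := by
  let e : Module.Free.ChooseBasisIndex ℤ Λ ≃ ι := Fintype.equivOfCardEq (by
    rw [← Module.finrank_eq_card_chooseBasisIndex, ZLattice.rank ℝ,
      Module.finrank_fintype_fun_eq_card])
  have h := covolume.tendsto_card_div_pow Λ ((Module.Free.chooseBasis ℤ Λ).reindex e)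
    isBounded_closedBall measurableSet_closedBall
    ((convex_closedBall (0 : ι → ℝ) 1).addHaar_frontier volume)
  have hvol : volume.real (closedBall (0 : ι → ℝ) 1) = 2 ^ Fintype.card ι := by
    simp [measureReal_def, Real.volume_pi_closedBall]
  have hlim : (2 : ℝ) ^ Fintype.card ι / covolume Λ / 2 ^ Fintype.card ι = (covolume Λ)⁻¹ := by
    field_simp
  rw [hvol] at h
  rw [← hlim]
  refine (h.div_const _).congr' ?_
  filter_upwards [eventually_ne_atTop 0] with n hn
  rw [card_closedBall_one_inter_inv_smul _ (Nat.cast_pos.mpr (Nat.pos_of_ne_zero hn)), mul_pow,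
    div_div, mul_comm]

theorem tendsto_card_inter_closedBall_sub_div_pow (k : ℕ) :
    Tendsto (fun n : ℕ => (Nat.card ((Λ : Set (ι → ℝ)) ∩ closedBall 0 (n - k) : Set (ι → ℝ)) : ℝ) /
      (2 * n) ^ Fintype.card ι) atTop (𝓝 (covolume Λ)⁻¹) := by
  rw [← tendsto_add_atTop_iff_nat k]
  have h := (tendsto_card_inter_closedBall_div_pow Λ).mul
    ((tendsto_natCast_div_add_atTop (k : ℝ)).pow (Fintype.card ι))
  rw [one_pow, mul_one] at h
  refine h.congr' ?_
  filter_upwards [eventually_ne_atTop 0] with n hn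
  have hn' : (n : ℝ) ≠ 0 := Nat.cast_ne_zero.mpr hn
  have hnk : (n : ℝ) + k ≠ 0 := by positivity
  push_cast
  rw [add_sub_cancel_right, div_pow, mul_pow, mul_pow]
  field_simp

theorem tendsto_ncard_sub_mem_div_pow {z : ι → ℝ} (hz : z ∈ Λ) :
    Tendsto (fun n : ℕ => ({x ∈ (Λ : Set (ι → ℝ)) ∩ closedBall 0 n |
        x - z ∈ (Λ : Set (ι → ℝ)) ∩ closedBall 0 n}.ncard : ℝ) / (2 * n) ^ Fintype.card ι)
      atTop (𝓝 (covolume Λ)⁻¹) := by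
  have hfin (r : ℝ) : ((Λ : Set (ι → ℝ)) ∩ closedBall 0 r).Finite :=
    Λ.toAddSubgroup.finite_inter_of_isBounded isBounded_closedBall
  refine tendsto_of_tendsto_of_tendsto_of_le_of_le
    (tendsto_card_inter_closedBall_sub_div_pow Λ ⌈‖z‖⌉₊) (tendsto_card_inter_closedBall_div_pow Λ)
    (fun n => ?_) (fun n => ?_) <;> simp only [Nat.card_coe_set_eq] <;> gcongr
  · exact (hfin n).subset (Set.sep_subset _ _)
  · refine (Set.inter_subset_inter_right _ (closedBall_subset_closedBall ?_)).trans
      (Λ.toAddSubgroup.inter_closedBall_sub_norm_subset hz n)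
    linarith [Nat.le_ceil ‖z‖]
  · exact hfin n
  · exact Set.sep_subset _ _

end ZLattice

theorem lattice_autocorrelation_general {d : ℕ} (L : AddSubgroup (Fin d → ℝ))
    (hdisc : DiscreteTopology L) (hcompact : CompactSpace ((Fin d → ℝ) ⧸ L))
    (F : Set (Fin d → ℝ)) (hF : IsAddFundamentalDomain L F volume)
    (f : (Fin d → ℝ) → ℂ) (hsupp : HasCompactSupport f) :
    Tendsto (fun n : ℕ =>
        (1 / ((2 * n : ℝ) ^ d) : ℂ) *
          ∑' p : ↥((L : Set (Fin d → ℝ)) ∩ Set.pi Set.univ fun _ => Set.Icc (-(n : ℝ)) n) ×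
                 ↥((L : Set (Fin d → ℝ)) ∩ Set.pi Set.univ fun _ => Set.Icc (-(n : ℝ)) n),
            f ((p.1 : Fin d → ℝ) - (p.2 : Fin d → ℝ)))
      atTop (nhds ((1 / ((volume F).toReal) : ℂ) * ∑' z : L, f z)) := by
  let Λ := L.toIntSubmodule
  have : DiscreteTopology Λ := hdisc
  have : IsZLattice ℝ Λ := ⟨L.span_eq_top_of_compactSpace_quotient⟩
  have hΛ : (Λ : Set (Fin d → ℝ)) = L := L.coe_toIntSubmodule
  have hcovol : (volume F).toReal = ZLattice.covolume Λ :=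
    (ZLattice.covolume_eq_measure_fundamentalDomain Λ volume hF).symm
  let T := (L.finite_inter_of_isBounded hsupp.isBounded).toFinset
  have hTL : ∀ z ∈ T, z ∈ L := fun z hz => ((Set.Finite.mem_toFinset _).mp hz).1
  have hT : ∀ z ∈ L, f z ≠ 0 → z ∈ T := fun z hz hfz => by
    simpa [T, hz] using subset_tsupport f hfz
  have htsum : ∑' z : L, f z = ∑ z ∈ T, f z :=
    tsum_subtype_eq_sum (s := L) f hTL hT
  have hsum (n : ℕ) := (L.finite_inter_of_isBounded (isBounded_closedBall (x := 0) (r := n))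
    ).tsum_prod_sub_eq_sum_ncard_nsmul T f fun x hx y hy => hT _ (sub_mem hx.1 hy.1)
  have hcube (n : ℕ) := Set.pi_univ_Icc_neg_eq_closedBall (ι := Fin d) (Nat.cast_nonneg' n)
  refine Tendsto.congr (f₁ := fun n : ℕ => (1 / ((2 * n : ℝ) ^ d) : ℂ) * ∑ z ∈ T,
      {x ∈ (L : Set (Fin d → ℝ)) ∩ closedBall 0 n | x - z ∈ (L : Set _) ∩ closedBall 0 n}.ncard • f z)
    (fun n => by rw [hcube n, hsum n]) ?_
  simp_rw [htsum, hcovol, Finset.mul_sum]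
  refine tendsto_finsetSum T fun z hz => ?_
  have h := ((ZLattice.tendsto_ncard_sub_mem_div_pow Λ (hTL z hz)).ofReal).mul_const (f z)
  rw [Fintype.card_fin, hΛ] at h
  convert h using 2 with n <;> push_cast <;> ring

/-- Vague convergence of the normalised finite autocorrelations of a lattice Dirac comb:
for a lattice `L ⊆ ℝ^d` with fundamental domain `F` and centered cubes `Bₙ = [-n,n]^d`,
for every continuous compactly supported `f : ℝ^d → ℂ`,
`(1/vol Bₙ) ∑_{x,y ∈ L ∩ Bₙ} f (x - y) → dens(L) ∑_{z ∈ L} f z`, where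
`dens(L) = 1 / vol(F)`. -/
theorem lattice_autocorrelation {d : ℕ} (L : AddSubgroup (Fin d → ℝ))
    (hdisc : DiscreteTopology L) (hcompact : CompactSpace ((Fin d → ℝ) ⧸ L))
    (F : Set (Fin d → ℝ)) (hF : IsAddFundamentalDomain L F volume)
    (f : (Fin d → ℝ) → ℂ) (hcont : Continuous f) (hsupp : HasCompactSupport f) :
    Tendsto (fun n : ℕ =>
        (1 / ((2 * n : ℝ) ^ d) : ℂ) *
          ∑' p : ↥((L : Set (Fin d → ℝ)) ∩ Set.pi Set.univ fun _ => Set.Icc (-(n : ℝ)) n) ×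
                 ↥((L : Set (Fin d → ℝ)) ∩ Set.pi Set.univ fun _ => Set.Icc (-(n : ℝ)) n),
            f ((p.1 : Fin d → ℝ) - (p.2 : Fin d → ℝ)))
      atTop (nhds ((1 / ((volume F).toReal) : ℂ) * ∑' z : L, f z)) :=
  lattice_autocorrelation_general L hdisc hcompact F hF f hsupp
end

section
/- The set of period doubling positions D = ⋃_{j ≥ 0} (2·4^j ℤ + (4^j - 1)) is a disjoint union of the arithmetic progressions 2·4^j ℤ + (4^j - 1), and the density of D in ℤ exists and equals ∑_{j≥0} 1/(2·4^j) = 2/3. -/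
/-!
The `j`-th progression `2·4^j ℤ + (4^j - 1)` consists of the `z` with `z + 1 = 4^j · (odd)`,
which makes the progressions pairwise disjoint; it has density `1 / (2·4^j)`. Only the
progressions with `4^j ≤ n + 1` meet `[-n, n]`, and on those the count error `≤ 1` is absorbed,
so the proportion of `[-n, n]` lying in the `j`-th progression is at most `2 · 4^{-j}`,
uniformly in `n`. Tannery's theorem then lets the density of the union be summed termwise:
`∑ 1 / (2·4^j) = 2/3`.
-/

open Filter Topology Function

theorem Set.natCard_iUnion_inter_eq_sum {ι α : Type*} {S : ι → Set α} {T : Set α} (hT : T.Finite)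
    (hS : Pairwise (Disjoint on S)) {s : Finset ι} (hs : ∀ j ∉ s, S j ∩ T = ∅) :
    Nat.card ↥((⋃ j, S j) ∩ T) = ∑ j ∈ s, Nat.card ↥(S j ∩ T) := by
  have hunion : (⋃ j, S j) ∩ T = ⋃ j ∈ (s : Set ι), S j ∩ T := by
    ext x
    simp only [Set.mem_inter_iff, Set.mem_iUnion, Finset.mem_coe, exists_prop]
    constructor
    · rintro ⟨⟨j, hj⟩, hx⟩
      refine ⟨j, by_contra fun hjs => ?_, hj, hx⟩
      exact (hs j hjs).subset ⟨hj, hx⟩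
    · rintro ⟨j, -, hj, hx⟩
      exact ⟨⟨j, hj⟩, hx⟩
  simp only [Nat.card_coe_set_eq]
  rw [hunion, s.finite_toSet.ncard_biUnion (fun j _ => hT.inter_of_right _)
    (fun i _ j _ hij => (hS hij).mono Set.inter_subset_left Set.inter_subset_left),
    finsum_mem_coe_finset]

namespace Int

theorem abs_card_modEq_inter_Icc_sub_le (v : ℤ) {r : ℤ} (hr : 0 < r) {a b : ℤ}
    (hab : a ≤ b + 1) :
    |(Nat.card ↥({x | x ≡ v [ZMOD r]} ∩ Set.Icc a b) : ℝ) - (b - a + 1) / r| ≤ 1 := by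
  have hset : {x | x ≡ v [ZMOD r]} ∩ Set.Icc a b =
      ↑({x ∈ Finset.Ioc (a - 1) b | x ≡ v [ZMOD r]}) := by
    ext x
    simp only [Set.mem_inter_iff, Set.mem_ofPred_eq, Set.mem_Icc, Finset.coe_filter,
      Finset.mem_Ioc, Int.sub_one_lt_iff]
    tauto
  have hcard := Ioc_filter_modEq_card (a - 1) b hr v
  set X : ℚ := (b - v) / r
  set Y : ℚ := ((a - 1 : ℤ) - v) / r
  have hXY : X - Y = (b - a + 1) / r := by
    simp only [X, Y]; push_cast; ring
  have hYX : Y ≤ X := by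
    rw [← sub_nonneg, hXY]
    exact div_nonneg (by exact_mod_cast (by omega : (0 : ℤ) ≤ b - a + 1)) (by exact_mod_cast hr.le)
  rw [max_eq_left (sub_nonneg.mpr (Int.floor_mono hYX))] at hcard
  rw [hset, Nat.card_coe_set_eq, Set.ncard_coe_finset]
  have hfloor : |((⌊X⌋ - ⌊Y⌋ : ℤ) : ℚ) - (b - a + 1) / r| ≤ 1 := by
    rw [abs_le, ← hXY]
    have := Int.floor_le X; have := Int.lt_floor_add_one X
    have := Int.floor_le Y; have := Int.lt_floor_add_one Y
    push_cast
    constructor <;> linarith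
  rw [← hcard] at hfloor
  exact_mod_cast hfloor

theorem tendsto_card_modEq_inter_Icc_div (v : ℤ) {r : ℤ} (hr : 0 < r) :
    Tendsto (fun n : ℕ =>
        (Nat.card ↥({x | x ≡ v [ZMOD r]} ∩ Set.Icc (-(n : ℤ)) n) : ℝ) / (2 * n + 1))
      atTop (𝓝 (1 / r)) := by
  rw [tendsto_iff_norm_sub_tendsto_zero]
  refine squeeze_zero (fun _ => norm_nonneg _) (fun n => ?_)
    tendsto_one_div_add_atTop_nhds_zero_nat
  set c : ℝ := (Nat.card ↥({x | x ≡ v [ZMOD r]} ∩ Set.Icc (-(n : ℤ)) n) : ℝ)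
  have hpos : (0 : ℝ) < 2 * n + 1 := by positivity
  have hc : |c - (2 * n + 1) / r| ≤ 1 := by
    have := Int.abs_card_modEq_inter_Icc_sub_le v hr (a := -n) (b := n) (by omega)
    push_cast at this
    convert this using 3; ring
  calc ‖c / (2 * n + 1) - 1 / r‖ = |c - (2 * n + 1) / r| / (2 * n + 1) := by
        rw [Real.norm_eq_abs, show c / (2 * n + 1) - 1 / r = (c - (2 * n + 1) / r) / (2 * n + 1)
          by field_simp, abs_div, abs_of_pos hpos]
    _ ≤ 1 / (2 * n + 1) := by gcongr
    _ ≤ 1 / (n + 1) := by gcongr; linarith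

end Int

namespace PeriodDoubling

def progression (j : ℕ) : Set ℤ := {z | z ≡ 4 ^ j - 1 [ZMOD 2 * 4 ^ j]}

theorem setOf_eq_progression (j : ℕ) :
    {z : ℤ | ∃ k : ℤ, z = 2 * 4 ^ j * k + 4 ^ j - 1} = progression j := by
  ext z
  simp only [progression, Set.mem_ofPred_eq, Int.modEq_iff_dvd, dvd_iff_exists_eq_mul_right]
  constructor <;> rintro ⟨k, hk⟩ <;> exact ⟨-k, by linarith⟩

theorem disjoint_progression_of_lt {i j : ℕ} (hij : i < j) :
    Disjoint (progression i) (progression j) := by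
  obtain ⟨t, rfl⟩ := Nat.exists_eq_add_of_lt hij
  -- since `2·4^i ∣ 4^j`, reducing the `j`-th congruence mod `2·4^i` forces `2·4^i ∣ 4^i`
  have hdvd : 2 * 4 ^ i ∣ (4 : ℤ) ^ (i + t + 1) := Dvd.intro (2 * 4 ^ t) (by ring)
  rw [Set.disjoint_left]
  intro z hzi hzj
  have hmod : (4 : ℤ) ^ i - 1 ≡ 4 ^ (i + t + 1) - 1 [ZMOD 2 * 4 ^ i] :=
    hzi.symm.trans (hzj.of_dvd (dvd_mul_of_dvd_right hdvd 2))
  have hself : 2 * 4 ^ i ∣ (4 : ℤ) ^ i :=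
    Int.modEq_zero_iff_dvd.mp ((hmod.add_right_cancel' (-1)).trans
      (Int.modEq_zero_iff_dvd.mpr hdvd))
  have := Int.le_of_dvd (by positivity) hself
  linarith [pow_pos (by norm_num : (0 : ℤ) < 4) i]

theorem pairwise_disjoint_progression : Pairwise (Disjoint on progression) := by
  intro i j hij
  rcases hij.lt_or_gt with h | h
  · exact disjoint_progression_of_lt h
  · exact (disjoint_progression_of_lt h).symm

theorem pow_le_of_mem_progression_of_mem_Icc {j n : ℕ} {z : ℤ} (hz : z ∈ progression j)
    (hzn : z ∈ Set.Icc (-(n : ℤ)) n) : (4 : ℤ) ^ j ≤ n + 1 := by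
  rw [← setOf_eq_progression] at hz
  obtain ⟨k, rfl⟩ := hz
  obtain ⟨hlo, hhi⟩ := hzn
  have : (0 : ℤ) < 4 ^ j := by positivity
  rcases le_or_gt 0 k with hk | hk <;> nlinarith

theorem progression_inter_Icc_eq_empty {j n : ℕ} (h : n + 1 < 4 ^ j) :
    progression j ∩ Set.Icc (-(n : ℤ)) n = ∅ := by
  refine Set.eq_empty_of_forall_notMem fun z ⟨hz, hzn⟩ => ?_
  exact (pow_le_of_mem_progression_of_mem_Icc hz hzn).not_gt (by exact_mod_cast h)

theorem card_progression_inter_Icc_div_le (j n : ℕ) :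
    (Nat.card ↥(progression j ∩ Set.Icc (-(n : ℤ)) n) : ℝ) / (2 * n + 1) ≤ 2 * (1 / 4) ^ j := by
  set c : ℝ := (Nat.card ↥(progression j ∩ Set.Icc (-(n : ℤ)) n) : ℝ)
  have hn : (0 : ℝ) < 2 * n + 1 := by positivity
  rcases (progression j ∩ Set.Icc (-(n : ℤ)) n).eq_empty_or_nonempty with h | ⟨z, hz, hzn⟩
  · rw [show c = 0 by simp [c, h], zero_div]
    positivity
  have hj : (4 : ℝ) ^ j ≤ n + 1 := by exact_mod_cast pow_le_of_mem_progression_of_mem_Icc hz hzn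
  set q : ℝ := 4 ^ j
  have hq : 0 < q := by positivity
  have hc := (abs_le.mp (Int.abs_card_modEq_inter_Icc_sub_le (4 ^ j - 1) (r := 2 * 4 ^ j)
    (by positivity) (a := -n) (b := n) (by omega))).2
  rw [← progression] at hc
  push_cast at hc
  rw [show (n : ℝ) - -n + 1 = 2 * n + 1 by ring] at hc
  -- the count error `1` is at most `(n + 1) / q`, since `q ≤ n + 1`
  have hmul : (2 * n + 1) / (2 * q) * q = (2 * n + 1) / 2 := by field_simp
  rw [one_div_pow, div_le_iff₀ hn, mul_one_div, div_mul_eq_mul_div, le_div_iff₀ hq]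
  nlinarith [mul_le_mul_of_nonneg_right (sub_le_iff_le_add'.mp hc) hq.le]

theorem hasSum_one_div_two_mul_four_pow : HasSum (fun j : ℕ => 1 / (2 * 4 ^ j : ℝ)) (2 / 3) := by
  have h := (hasSum_geometric_of_lt_one (r := (1 / 4 : ℝ)) (by norm_num) (by norm_num)).mul_left
    (1 / 2)
  rw [show (2 / 3 : ℝ) = 1 / 2 * (1 - 1 / 4)⁻¹ by norm_num]
  exact h.congr_fun fun j => by rw [one_div_pow]; field_simp

theorem tendsto_card_progression_inter_Icc_div (j : ℕ) :
    Tendsto (fun n : ℕ =>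
        (Nat.card ↥(progression j ∩ Set.Icc (-(n : ℤ)) n) : ℝ) / (2 * n + 1))
      atTop (𝓝 (1 / (2 * 4 ^ j))) := by
  have h := Int.tendsto_card_modEq_inter_Icc_div (4 ^ j - 1) (r := 2 * 4 ^ j) (by positivity)
  push_cast at h
  exact h

theorem card_iUnion_progression_inter_Icc (n : ℕ) :
    (Nat.card ↥((⋃ j, progression j) ∩ Set.Icc (-(n : ℤ)) n) : ℝ) =
      ∑' j, (Nat.card ↥(progression j ∩ Set.Icc (-(n : ℤ)) n) : ℝ) := by
  have hvanish (j : ℕ) (hj : j ∉ Finset.range (n + 1)) :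
      progression j ∩ Set.Icc (-(n : ℤ)) n = ∅ := by
    refine progression_inter_Icc_eq_empty ((Nat.succ_le_of_lt ?_).trans_lt (Nat.lt_pow_self ?_))
    · simpa using hj
    · norm_num
  rw [Set.natCard_iUnion_inter_eq_sum (Set.finite_Icc _ _) pairwise_disjoint_progression hvanish,
    tsum_eq_sum (s := Finset.range (n + 1)) fun j hj => by simp [hvanish j hj], Nat.cast_sum]

end PeriodDoubling

open PeriodDoubling in
/-- The period doubling positions `D = ⋃_{j ≥ 0} (2·4^j ℤ + (4^j - 1))` form a
disjoint union of arithmetic progressions, and the density of `D` in `ℤ` exists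
and equals `∑_{j ≥ 0} 1/(2·4^j) = 2/3`. -/
theorem period_doubling_density :
    (Pairwise fun i j : ℕ =>
      Disjoint {z : ℤ | ∃ k : ℤ, z = 2 * 4 ^ i * k + 4 ^ i - 1}
        {z : ℤ | ∃ k : ℤ, z = 2 * 4 ^ j * k + 4 ^ j - 1}) ∧
    Tendsto (fun n : ℕ =>
        (Nat.card ↥((⋃ j : ℕ, {z : ℤ | ∃ k : ℤ, z = 2 * 4 ^ j * k + 4 ^ j - 1}) ∩
            Set.Icc (-(n : ℤ)) (n : ℤ)) : ℝ) / (2 * n + 1))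
      atTop (nhds (2 / 3)) := by
  simp_rw [setOf_eq_progression, card_iUnion_progression_inter_Icc, ← tsum_div_const]
  refine ⟨pairwise_disjoint_progression, ?_⟩
  rw [← hasSum_one_div_two_mul_four_pow.tsum_eq]
  exact tendsto_tsum_of_dominated_convergence
    ((summable_geometric_of_lt_one (r := 1 / 4) (by norm_num) (by norm_num)).mul_left 2)
    tendsto_card_progression_inter_Icc_div
    (Eventually.of_forall fun n j => by
      rw [Real.norm_of_nonneg (by positivity)]
      exact card_progression_inter_Icc_div_le j n)
end
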